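/- Let x be a random vector in ℝ^d whose law is the standard Gaussian measure γ_d, and let c > 0. Let b = √(1 + 2√c + 2c). Then P(‖x‖ ≥ b√d) ≤ exp(−c·d). Moreover, if additionally 2√c < 1 and b' = √(1 − 2√c), then P(‖x‖ ≤ b'√d) ≤ exp(−c·d). -/

import Mathlib

open MeasureTheory ProbabilityTheory

/-- The standard Gaussian measure on `ℝ^d`: the law of a vector with `d` independent
standard normal coordinates. -/
noncomputable def stdGaussian (d : ℕ) : Measure (EuclideanSpace ℝ (Fin d)) :=
  Measure.map (MeasurableEquiv.toLp 2 (Fin d → ℝ)) (Measure.pi fun _ => gaussianReal 0 1)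

/-!
Chernoff bounds for `‖x‖²`, whose moment generating function is `(1 - 2t)^(-d/2)` for `t < 1/2`
because the coordinates are independent standard normals. With `s = √c`, the upper tail takes
`t = (s + s²) / (1 + 2s + 2s²)`, so that `1 - 2t = (1 + 2s + 2s²)⁻¹`, and uses
`1 + 2s + 2s² ≤ exp (2s)`; the lower tail takes `t = -s` and uses `u - u²/2 ≤ log (1 + u)`.
-/

open Real

lemma integral_exp_mul_sq_gaussianReal {t : ℝ} (ht : t < 1 / 2) :
    ∫ x, exp (t * x ^ 2) ∂gaussianReal 0 1 = (√(1 - 2 * t))⁻¹ := by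
  have hpdf (x : ℝ) : gaussianPDFReal 0 1 x * exp (t * x ^ 2) =
      (√(2 * π))⁻¹ * exp (-(1 / 2 - t) * x ^ 2) := by
    simp only [gaussianPDFReal, NNReal.coe_one, mul_one, sub_zero, mul_assoc, ← exp_add]
    ring_nf
  simp_rw [integral_gaussianReal_eq_integral_smul one_ne_zero, smul_eq_mul, hpdf,
    integral_const_mul, integral_gaussian, ← sqrt_inv]
  rw [← sqrt_mul (by positivity)]
  congr 1
  have : 0 < 1 - 2 * t := by linarith
  field_simp

lemma sub_sq_div_two_le_log_one_add {u : ℝ} (hu : 0 ≤ u) : u - u ^ 2 / 2 ≤ log (1 + u) := by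
  refine le_trans ?_ (le_log_one_add_of_nonneg hu)
  rw [le_div_iff₀ (by linarith)]
  nlinarith [sq_nonneg u, mul_nonneg hu (sq_nonneg u)]

lemma inv_sqrt_pow_eq_exp {a : ℝ} (ha : 0 < a) (d : ℕ) :
    (√a)⁻¹ ^ d = exp (-(d / 2 * log a)) := by
  rw [sqrt_eq_rpow, ← rpow_neg ha.le, ← rpow_natCast, ← rpow_mul ha.le, rpow_def_of_pos ha]
  ring_nf

instance isProbabilityMeasure_stdGaussian (d : ℕ) : IsProbabilityMeasure (stdGaussian d) :=
  Measure.isProbabilityMeasure_map (MeasurableEquiv.toLp 2 (Fin d → ℝ)).measurable.aemeasurable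

lemma mgf_norm_sq_stdGaussian (d : ℕ) {t : ℝ} (ht : t < 1 / 2) :
    mgf (fun x => ‖x‖ ^ 2) (stdGaussian d) t = exp (-(d / 2 * log (1 - 2 * t))) := by
  have hprod (x : Fin d → ℝ) :
      exp (t * ‖WithLp.toLp 2 x‖ ^ 2) = ∏ i, exp (t * x i ^ 2) := by
    rw [EuclideanSpace.norm_sq_eq, Finset.mul_sum, exp_sum]
    simp
  rw [mgf, _root_.stdGaussian, integral_map_equiv]
  simp only [MeasurableEquiv.toLp_apply, hprod]
  rw [integral_fintype_prod_eq_pow (fun y => exp (t * y ^ 2)),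
    integral_exp_mul_sq_gaussianReal ht, Fintype.card_fin, inv_sqrt_pow_eq_exp (by linarith)]

lemma stdGaussian_real_norm_sq_ge_le (d : ℕ) {t : ℝ} (ht₀ : 0 ≤ t) (ht : t < 1 / 2) (ε : ℝ) :
    (stdGaussian d).real {x | ε ≤ ‖x‖ ^ 2} ≤ exp (-(t * ε) - d / 2 * log (1 - 2 * t)) := by
  have hmgf := mgf_norm_sq_stdGaussian d ht
  have hint := mgf_pos_iff.mp (hmgf ▸ exp_pos _)
  calc _ ≤ exp (-t * ε) * mgf (fun x => ‖x‖ ^ 2) (stdGaussian d) t :=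
        measure_ge_le_exp_mul_mgf ε ht₀ hint
    _ = _ := by rw [hmgf, ← exp_add]; ring_nf

lemma stdGaussian_real_norm_sq_le_le (d : ℕ) {t : ℝ} (ht : t ≤ 0) (ε : ℝ) :
    (stdGaussian d).real {x | ‖x‖ ^ 2 ≤ ε} ≤ exp (-(t * ε) - d / 2 * log (1 - 2 * t)) := by
  have hmgf := mgf_norm_sq_stdGaussian d (ht.trans_lt (by norm_num))
  have hint := mgf_pos_iff.mp (hmgf ▸ exp_pos _)
  calc _ ≤ exp (-t * ε) * mgf (fun x => ‖x‖ ^ 2) (stdGaussian d) t :=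
        measure_le_le_exp_mul_mgf ε ht hint
    _ = _ := by rw [hmgf, ← exp_add]; ring_nf

lemma stdGaussian_real_norm_sq_ge_one_add_le (d : ℕ) {s : ℝ} (hs : 0 ≤ s) :
    (stdGaussian d).real {x | (1 + 2 * s + 2 * s ^ 2) * d ≤ ‖x‖ ^ 2} ≤ exp (-(s ^ 2 * d)) := by
  set B := 1 + 2 * s + 2 * s ^ 2
  have hB : 0 < B := by positivity
  have hlogB : log B ≤ 2 * s := by
    rw [log_le_iff_le_exp hB]
    have := quadratic_le_exp_of_nonneg (by positivity : (0 : ℝ) ≤ 2 * s)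
    linarith
  have ht : (s + s ^ 2) / B < 1 / 2 := by
    rw [div_lt_iff₀ hB]; linarith
  refine (stdGaussian_real_norm_sq_ge_le d (by positivity) ht _).trans (exp_le_exp.mpr ?_)
  have h1 : 1 - 2 * ((s + s ^ 2) / B) = B⁻¹ := by field_simp; ring
  have h2 : (s + s ^ 2) / B * (B * d) = (s + s ^ 2) * d := by field_simp
  rw [h1, log_inv, h2]
  nlinarith [(Nat.cast_nonneg d : (0 : ℝ) ≤ d)]

lemma stdGaussian_real_norm_sq_le_one_sub_le (d : ℕ) {s : ℝ} (hs : 0 ≤ s) :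
    (stdGaussian d).real {x | ‖x‖ ^ 2 ≤ (1 - 2 * s) * d} ≤ exp (-(s ^ 2 * d)) := by
  refine (stdGaussian_real_norm_sq_le_le d (neg_nonpos.mpr hs) _).trans (exp_le_exp.mpr ?_)
  have hlog := sub_sq_div_two_le_log_one_add (by positivity : (0 : ℝ) ≤ 2 * s)
  rw [mul_neg, sub_neg_eq_add]
  nlinarith [(Nat.cast_nonneg d : (0 : ℝ) ≤ d)]

theorem gaussian_norm_concentration_general (d : ℕ) (c : ℝ) (hc : 0 < c) :
    stdGaussian d
        {x | Real.sqrt (1 + 2 * Real.sqrt c + 2 * c) * Real.sqrt d ≤ ‖x‖}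
      ≤ ENNReal.ofReal (Real.exp (-(c * d))) ∧
    (2 * Real.sqrt c < 1 →
      stdGaussian d {x | ‖x‖ ≤ Real.sqrt (1 - 2 * Real.sqrt c) * Real.sqrt d}
        ≤ ENNReal.ofReal (Real.exp (-(c * d)))) := by
  obtain ⟨s, hs, rfl⟩ : ∃ s, 0 ≤ s ∧ s ^ 2 = c := ⟨√c, sqrt_nonneg c, sq_sqrt hc.le⟩
  rw [sqrt_sq hs]
  refine ⟨?_, fun h => ?_⟩
  · have hset : {x : EuclideanSpace ℝ (Fin d) | √(1 + 2 * s + 2 * s ^ 2) * √d ≤ ‖x‖} =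
        {x | (1 + 2 * s + 2 * s ^ 2) * d ≤ ‖x‖ ^ 2} := by
      ext x
      rw [Set.mem_ofPred_eq, ← sqrt_mul' _ d.cast_nonneg, sqrt_le_left (norm_nonneg x)]
      rfl
    rw [hset, ← ofReal_measureReal]
    exact ENNReal.ofReal_le_ofReal (stdGaussian_real_norm_sq_ge_one_add_le d hs)
  · have hset : {x : EuclideanSpace ℝ (Fin d) | ‖x‖ ≤ √(1 - 2 * s) * √d} =
        {x | ‖x‖ ^ 2 ≤ (1 - 2 * s) * d} := by
      ext x
      rw [Set.mem_ofPred_eq, ← sqrt_mul (by linarith), le_sqrt (norm_nonneg x) (by positivity)]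
      rfl
    rw [hset, ← ofReal_measureReal]
    exact ENNReal.ofReal_le_ofReal (stdGaussian_real_norm_sq_le_one_sub_le d hs)

/-- **Concentration of the length of a spherical Gaussian** (reparametrized
Laurent–Massart bounds).  Let `x` have law the standard Gaussian measure `γ_d` on `ℝ^d`
and let `c > 0`.  With `b = √(1 + 2√c + 2c)` one has
`P(‖x‖ ≥ b √d) ≤ exp (-c d)`; moreover if `2√c < 1` and `b' = √(1 - 2√c)` then
`P(‖x‖ ≤ b' √d) ≤ exp (-c d)`. -/
theorem gaussian_norm_concentration (d : ℕ) (hd : 0 < d) (c : ℝ) (hc : 0 < c) :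
    stdGaussian d
        {x | Real.sqrt (1 + 2 * Real.sqrt c + 2 * c) * Real.sqrt d ≤ ‖x‖}
      ≤ ENNReal.ofReal (Real.exp (-(c * d))) ∧
    (2 * Real.sqrt c < 1 →
      stdGaussian d {x | ‖x‖ ≤ Real.sqrt (1 - 2 * Real.sqrt c) * Real.sqrt d}
        ≤ ENNReal.ofReal (Real.exp (-(c * d)))) :=
  gaussian_norm_concentration_general d c hc
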